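/- Let su(2) carry bi-invariant inner products: if ⟨,⟩₂ satisfies ⟨[u,v],w⟩₂ = −⟨v,[u,w]⟩₂ (ad-invariance) then every Lie algebra automorphism ξ: (su(2),⟨,⟩₁) → (su(2),⟨,⟩₂) with ⟨,⟩₁ arbitrary has τ(ξ) determined by ⟨τ(ξ),u⟩₂ = tr(ξ*∘ad_u∘ξ), and when ⟨,⟩₂ is a positive multiple of the Killing form inner product (i.e., diag(λ,λ,λ) in the standard basis), τ(ξ) = 0 for every automorphism ξ; that is, every automorphism into a bi-invariant metric is harmonic. -/

import Mathlib

/-! For a bi-invariant metric the bracket is skew, so `⟨[w,u],u⟩ = 0`, and Koszul's formula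
collapses to `⟨B_u u, w⟩ = 0` for all `w`. Hence `B_u u = 0` for every `u`, and `τ(ξ)`,
a sum of such terms, vanishes for every linear map `ξ`. -/

noncomputable section

/-- Diagonal inner product on `ℝ³` with diagonal `d`. -/
def ip (d : Fin 3 → ℝ) (u v : Fin 3 → ℝ) : ℝ :=
  d 0 * u 0 * v 0 + d 1 * u 1 * v 1 + d 2 * u 2 * v 2

/-- The bracket of `su(2)`: `[X₁,X₂]=X₃`, `[X₂,X₃]=X₁`, `[X₃,X₁]=X₂`. -/
def brSU (u v : Fin 3 → ℝ) : Fin 3 → ℝ :=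
  ![u 1 * v 2 - u 2 * v 1, u 2 * v 0 - u 0 * v 2, u 0 * v 1 - u 1 * v 0]

theorem ip_comm (d u v : Fin 3 → ℝ) : ip d u v = ip d v u := by
  simp only [ip]
  ring

theorem ip_zero_left (d v : Fin 3 → ℝ) : ip d 0 v = 0 := by
  simp [ip]

theorem brSU_self (u : Fin 3 → ℝ) : brSU u u = 0 := by
  funext i
  fin_cases i <;> simp [brSU, mul_comm]

theorem ip_brSU_left (c : ℝ) (u v w : Fin 3 → ℝ) :
    ip ![c, c, c] (brSU u v) w = -ip ![c, c, c] v (brSU u w) := by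
  simp only [ip, brSU, Matrix.cons_val_zero, Matrix.cons_val_one, Matrix.cons_val_two,
    Matrix.head_cons, Matrix.tail_cons]
  ring

theorem ip_brSU_self_right (c : ℝ) (w u : Fin 3 → ℝ) : ip ![c, c, c] (brSU w u) u = 0 := by
  have h := ip_brSU_left c w u u
  rw [ip_comm _ u] at h
  linarith

theorem eq_zero_of_ip_self_eq_zero {c : ℝ} (hc : 0 < c) {v : Fin 3 → ℝ}
    (h : ip ![c, c, c] v v = 0) : v = 0 := by
  have hsq : v 0 ^ 2 + v 1 ^ 2 + v 2 ^ 2 = 0 := by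
    simp only [ip, Matrix.cons_val_zero, Matrix.cons_val_one, Matrix.cons_val_two,
      Matrix.head_cons, Matrix.tail_cons] at h
    have : c * (v 0 ^ 2 + v 1 ^ 2 + v 2 ^ 2) = 0 := by linarith
    exact (mul_eq_zero.mp this).resolve_left hc.ne'
  funext i
  fin_cases i <;> dsimp <;> nlinarith [sq_nonneg (v 0), sq_nonneg (v 1), sq_nonneg (v 2)]

theorem leviCivita_self_eq_zero {c : ℝ} (hc : 0 < c)
    {B : (Fin 3 → ℝ) → (Fin 3 → ℝ) → (Fin 3 → ℝ)}
    (hB : ∀ u v w, 2 * ip ![c, c, c] (B u v) w =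
      ip ![c, c, c] (brSU u v) w + ip ![c, c, c] (brSU w u) v
        + ip ![c, c, c] (brSU w v) u)
    (u : Fin 3 → ℝ) : B u u = 0 := by
  apply eq_zero_of_ip_self_eq_zero hc
  have h := hB u u (B u u)
  rw [brSU_self, ip_zero_left, ip_brSU_self_right] at h
  linarith

theorem su2_automorphism_into_biinvariant_harmonic_general
    (lam : ℝ) (hlam : 0 < lam)
    -- an orthonormal basis of ⟨,⟩₁
    (e : Fin 3 → (Fin 3 → ℝ))
    -- ξ is an automorphism of su(2)
    (ξ : (Fin 3 → ℝ) →ₗ[ℝ] (Fin 3 → ℝ))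
    (B : (Fin 3 → ℝ) → (Fin 3 → ℝ) → (Fin 3 → ℝ))
    -- B is the Levi-Civita product of the target metric diag(λ,λ,λ)
    (hB : ∀ u v w, 2 * ip ![lam, lam, lam] (B u v) w =
      ip ![lam, lam, lam] (brSU u v) w + ip ![lam, lam, lam] (brSU w u) v
        + ip ![lam, lam, lam] (brSU w v) u)
    (τ : Fin 3 → ℝ)
    -- τ(ξ) = Σ_i B_{ξ(e_i)} ξ(e_i)
    (hτ : τ = ∑ i, B (ξ (e i)) (ξ (e i))) :
    τ = 0 := by
  simp [hτ, leviCivita_self_eq_zero hlam hB]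

/-- Every Lie algebra automorphism `ξ : (su(2),⟨,⟩₁) → (su(2),diag(λ,λ,λ))` into the
bi-invariant metric `diag(λ,λ,λ)` is harmonic: `τ(ξ) = 0`. -/
theorem su2_automorphism_into_biinvariant_harmonic
    (lam : ℝ) (hlam : 0 < lam)
    -- an arbitrary inner product ⟨,⟩₁ on su(2): bilinear, symmetric, positive definite
    (ip1 : (Fin 3 → ℝ) →ₗ[ℝ] (Fin 3 → ℝ) →ₗ[ℝ] ℝ)
    (hip1_symm : ∀ u v, ip1 u v = ip1 v u)
    (hip1_pos : ∀ u, u ≠ 0 → 0 < ip1 u u)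
    -- an orthonormal basis of ⟨,⟩₁
    (e : Fin 3 → (Fin 3 → ℝ))
    (he : ∀ i j, ip1 (e i) (e j) = if i = j then 1 else 0)
    -- ξ is an automorphism of su(2)
    (ξ : (Fin 3 → ℝ) →ₗ[ℝ] (Fin 3 → ℝ))
    (hξ_bij : Function.Bijective ξ)
    (hξ_hom : ∀ u v, ξ (brSU u v) = brSU (ξ u) (ξ v))
    (B : (Fin 3 → ℝ) → (Fin 3 → ℝ) → (Fin 3 → ℝ))
    -- B is the Levi-Civita product of the target metric diag(λ,λ,λ)
    (hB : ∀ u v w, 2 * ip ![lam, lam, lam] (B u v) w =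
      ip ![lam, lam, lam] (brSU u v) w + ip ![lam, lam, lam] (brSU w u) v
        + ip ![lam, lam, lam] (brSU w v) u)
    (τ : Fin 3 → ℝ)
    -- τ(ξ) = Σ_i B_{ξ(e_i)} ξ(e_i)
    (hτ : τ = ∑ i, B (ξ (e i)) (ξ (e i))) :
    τ = 0 :=
  su2_automorphism_into_biinvariant_harmonic_general lam hlam e ξ B hB τ hτ
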